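/- Completeness of L^A_CS with respect to subset models: let L^A be a logic (consisting of cl, j, j+ together with some subset of {j4, jd, jt}) and CS a constant specification, where CS is required to be axiomatically appropriate in case jd ∈ L^A. Then for every formula F ∈ L_J^A, if M, Γ ⊩ F for all L^A_CS-subset models M and all Γ ∈ W0, then L^A_CS ⊢ F. -/

import Mathlib

/-- Justification terms `Tm^A`: constants `c_i`, variables `x_i`, application
`·`, sum `+` and `!`. -/
inductive TmA : Type
  | const : ℕ → TmA
  | var : ℕ → TmA
  | app : TmA → TmA → TmA
  | plus : TmA → TmA → TmA
  | bang : TmA → TmA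

/-- Formulas of `L_J^A`: atomic propositions, `⊥`, implication and `t:F`. -/
inductive FmlA : Type
  | atom : ℕ → FmlA
  | bot : FmlA
  | imp : FmlA → FmlA → FmlA
  | just : TmA → FmlA → FmlA

namespace FmlA
/-- `¬A := A → ⊥`. -/
def neg (A : FmlA) : FmlA := A.imp .bot
/-- `A ∨ B := ¬A → B`. -/
def or' (A B : FmlA) : FmlA := A.neg.imp B
/-- `A ∧ B := ¬(A → ¬B)`. -/
def and' (A B : FmlA) : FmlA := (A.imp B.neg).neg
end FmlA

/-- Which of the optional axioms j4, jd, jt belong to the logic `L^A`. -/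
structure FlagsA : Type where
  j4 : Bool
  jd : Bool
  jt : Bool

/-- The axioms of the logic `L^A`: classical propositional axioms, j, j+,
together with the optional axioms j4, jd, jt as given by the flags. -/
inductive AAxiom (fl : FlagsA) : FmlA → Prop
  | cl1 (A B : FmlA) : AAxiom fl (A.imp (B.imp A))
  | cl2 (A B C : FmlA) :
      AAxiom fl ((A.imp (B.imp C)).imp ((A.imp B).imp (A.imp C)))
  | cl3 (A : FmlA) : AAxiom fl (A.neg.neg.imp A)
  | j (s t : TmA) (A B : FmlA) :
      AAxiom fl ((FmlA.just s (A.imp B)).imp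
        ((FmlA.just t A).imp (FmlA.just (s.app t) B)))
  | jplus (s t : TmA) (A : FmlA) :
      AAxiom fl (((FmlA.just s A).or' (FmlA.just t A)).imp
        (FmlA.just (s.plus t) A))
  | j4 (t : TmA) (A : FmlA) (h : fl.j4 = true) :
      AAxiom fl ((FmlA.just t A).imp (FmlA.just t.bang (FmlA.just t A)))
  | jd (t : TmA) (h : fl.jd = true) :
      AAxiom fl ((FmlA.just t FmlA.bot).imp FmlA.bot)
  | jt (t : TmA) (A : FmlA) (h : fl.jt = true) :
      AAxiom fl ((FmlA.just t A).imp A)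

/-- `bangIterA n t = !…!t` with `n` occurrences of `!`. -/
def bangIterA : ℕ → TmA → TmA
  | 0, t => t
  | n + 1, t => (bangIterA n t).bang

/-- `anFmlA c A n = !…!c : !…!c : … : !c : c : A` (with `n, n-1, …, 1, 0` bangs). -/
def anFmlA (c : TmA) (A : FmlA) : ℕ → FmlA
  | 0 => FmlA.just c A
  | n + 1 => FmlA.just (bangIterA (n + 1) c) (anFmlA c A n)

/-- A constant specification for `L^A`: a set of pairs `(c, A)` where `c` is a
constant and `A` an axiom of `L^A`. -/
def IsCSA (fl : FlagsA) (CS : Set (ℕ × FmlA)) : Prop :=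
  ∀ p ∈ CS, AAxiom fl p.2

/-- `CS` is axiomatically appropriate: every axiom has a constant justifying it. -/
def AxAppropriateA (fl : FlagsA) (CS : Set (ℕ × FmlA)) : Prop :=
  ∀ A : FmlA, AAxiom fl A → ∃ c : ℕ, (c, A) ∈ CS

/-- Hilbert-style derivability in `L^A_CS`: axioms of `L^A`, modus ponens, and
axiom necessitation. -/
inductive DerivA (fl : FlagsA) (CS : Set (ℕ × FmlA)) : FmlA → Prop
  | ax {A : FmlA} : AAxiom fl A → DerivA fl CS A
  | mp {A B : FmlA} : DerivA fl CS (A.imp B) → DerivA fl CS A → DerivA fl CS B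
  | an {c : ℕ} {A : FmlA} (n : ℕ) (h : (c, A) ∈ CS) :
      DerivA fl CS (anFmlA (TmA.const c) A n)

/-- An `L^A_CS`-subset model `(W, W0, V, E)`; `V ω F` encodes `V(ω,F) = 1`. -/
structure AModel (fl : FlagsA) (CS : Set (ℕ × FmlA)) (W : Type*) : Type _ where
  W0 : Set W
  V : W → FmlA → Prop
  E : W → TmA → Set W
  w0_nonempty : W0.Nonempty
  v_bot : ∀ ω ∈ W0, ¬ V ω FmlA.bot
  v_imp : ∀ ω ∈ W0, ∀ F G : FmlA, V ω (F.imp G) ↔ (¬ V ω F ∨ V ω G)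
  v_just : ∀ ω ∈ W0, ∀ (t : TmA) (F : FmlA),
      V ω (FmlA.just t F) ↔ E ω t ⊆ {υ | V υ F}
  e_plus : ∀ ω ∈ W0, ∀ s t : TmA, E ω (s.plus t) ⊆ E ω s ∩ E ω t
  e_app : ∀ ω ∈ W0, ∀ s t : TmA,
      E ω (s.app t) ⊆ {υ | ∀ F : FmlA,
        (∃ H : FmlA, E ω s ⊆ {x | V x (H.imp F)} ∧ E ω t ⊆ {x | V x H}) →
          V υ F}
  e_jd : fl.jd = true → ∀ ω ∈ W0, ∀ t : TmA, ∃ υ ∈ W0, υ ∈ E ω t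
  e_jt : fl.jt = true → ∀ ω ∈ W0, ∀ t : TmA, ω ∈ E ω t
  e_j4 : fl.j4 = true → ∀ ω ∈ W0, ∀ t : TmA,
      E ω t.bang ⊆ {υ | ∀ F : FmlA, V ω (FmlA.just t F) → V υ (FmlA.just t F)}
  e_cs : ∀ ω ∈ W0, ∀ (c : ℕ) (A : FmlA), (c, A) ∈ CS →
      E ω (TmA.const c) ⊆ {υ | V υ A}
  e_cs_bang : ∀ ω ∈ W0, ∀ (c : ℕ) (A : FmlA), (c, A) ∈ CS → ∀ n : ℕ,
      E ω (bangIterA (n + 1) (TmA.const c)) ⊆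
        {υ | V υ (anFmlA (TmA.const c) A n)}

/-!
Canonical model argument. Worlds are sets of formulas, the normal worlds are the maximal
`L^A_CS`-consistent sets, a world satisfies exactly the formulas it contains, and the evidence
`E(Γ, t)` consists of all worlds containing every `F` with `t:F ∈ Γ`. Each condition on subset
models is then the closure of maximal consistent sets under the matching axiom; only the `jd`
condition needs more: `{F | t:F ∈ Γ}` must be consistent, which follows from the lifting lemma
(this is where axiomatic appropriateness enters). A non-derivable `F` leaves `{¬F}` consistent,
and a maximal consistent extension of it is a normal world of the canonical model refuting `F`.
-/

inductive DerivFromA (fl : FlagsA) (CS : Set (ℕ × FmlA)) (Γ : Set FmlA) : FmlA → Prop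
  | hyp {A : FmlA} : A ∈ Γ → DerivFromA fl CS Γ A
  | ax {A : FmlA} : AAxiom fl A → DerivFromA fl CS Γ A
  | mp {A B : FmlA} : DerivFromA fl CS Γ (A.imp B) → DerivFromA fl CS Γ A → DerivFromA fl CS Γ B
  | an {c : ℕ} {A : FmlA} (n : ℕ) (h : (c, A) ∈ CS) :
      DerivFromA fl CS Γ (anFmlA (TmA.const c) A n)

def ConsistentA (fl : FlagsA) (CS : Set (ℕ × FmlA)) (Γ : Set FmlA) : Prop :=
  ¬ DerivFromA fl CS Γ FmlA.bot

def MaxConsistentA (fl : FlagsA) (CS : Set (ℕ × FmlA)) (Γ : Set FmlA) : Prop :=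
  Maximal (ConsistentA fl CS) Γ

section

variable {fl : FlagsA} {CS : Set (ℕ × FmlA)} {Γ Δ : Set FmlA} {A B : FmlA}

namespace DerivFromA

theorem mono (hΓΔ : Γ ⊆ Δ) (h : DerivFromA fl CS Γ A) : DerivFromA fl CS Δ A := by
  induction h with
  | hyp hA => exact hyp (hΓΔ hA)
  | ax hA => exact ax hA
  | mp _ _ ihAB ihA => exact mp ihAB ihA
  | an n hc => exact an n hc

theorem of_derivA (h : DerivA fl CS A) : DerivFromA fl CS Γ A := by
  induction h with
  | ax hA => exact ax hA
  | mp _ _ ihAB ihA => exact mp ihAB ihA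
  | an n hc => exact an n hc

theorem derivA_of_empty (h : DerivFromA fl CS ∅ A) : DerivA fl CS A := by
  induction h with
  | hyp hA => exact absurd hA (Set.notMem_empty _)
  | ax hA => exact DerivA.ax hA
  | mp _ _ ihAB ihA => exact DerivA.mp ihAB ihA
  | an n hc => exact DerivA.an n hc

theorem imp_self (Γ : Set FmlA) (A : FmlA) : DerivFromA fl CS Γ (A.imp A) :=
  ((ax (AAxiom.cl2 A (A.imp A) A)).mp (ax (AAxiom.cl1 A (A.imp A)))).mp (ax (AAxiom.cl1 A A))

theorem deduction (h : DerivFromA fl CS (insert A Γ) B) : DerivFromA fl CS Γ (A.imp B) := by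
  induction h with
  | @hyp C hC =>
    rcases hC with rfl | hC
    · exact imp_self Γ C
    · exact (ax (AAxiom.cl1 C A)).mp (hyp hC)
  | @ax C hC => exact (ax (AAxiom.cl1 C A)).mp (ax hC)
  | @mp C D _ _ ihCD ihC => exact ((ax (AAxiom.cl2 A C D)).mp ihCD).mp ihC
  | an n hc => exact (ax (AAxiom.cl1 _ A)).mp (an n hc)

theorem bot_imp (Γ : Set FmlA) (A : FmlA) : DerivFromA fl CS Γ (FmlA.bot.imp A) :=
  deduction <| (ax (AAxiom.cl3 A)).mp <|
    (ax (AAxiom.cl1 FmlA.bot A.neg)).mp (hyp (Set.mem_insert _ _))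

theorem neg_imp_imp (Γ : Set FmlA) (A B : FmlA) : DerivFromA fl CS Γ (A.neg.imp (A.imp B)) :=
  deduction <| deduction <| (bot_imp _ B).mp <|
    (hyp (Set.mem_insert_of_mem _ (Set.mem_insert _ _))).mp (hyp (Set.mem_insert _ _))

theorem imp_or_left (Γ : Set FmlA) (A B : FmlA) : DerivFromA fl CS Γ (A.imp (A.or' B)) :=
  deduction <| deduction <| (bot_imp _ B).mp <|
    (hyp (Set.mem_insert _ _)).mp (hyp (Set.mem_insert_of_mem _ (Set.mem_insert _ _)))

theorem exists_finite_subset (h : DerivFromA fl CS Γ A) :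
    ∃ Δ ⊆ Γ, Δ.Finite ∧ DerivFromA fl CS Δ A := by
  induction h with
  | @hyp C hC => exact ⟨{C}, Set.singleton_subset_iff.mpr hC, Set.finite_singleton C,
      hyp rfl⟩
  | ax hA => exact ⟨∅, Set.empty_subset _, Set.finite_empty, ax hA⟩
  | mp _ _ ihAB ihA =>
    obtain ⟨Δ₁, hΔ₁, hfin₁, hd₁⟩ := ihAB
    obtain ⟨Δ₂, hΔ₂, hfin₂, hd₂⟩ := ihA
    exact ⟨Δ₁ ∪ Δ₂, Set.union_subset hΔ₁ hΔ₂, hfin₁.union hfin₂,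
      (hd₁.mono Set.subset_union_left).mp (hd₂.mono Set.subset_union_right)⟩
  | an n hc => exact ⟨∅, Set.empty_subset _, Set.finite_empty, an n hc⟩

theorem lift (hApp : AxAppropriateA fl CS) (t : TmA) (h : DerivFromA fl CS Γ A) :
    ∃ s : TmA, DerivFromA fl CS (FmlA.just t '' Γ) (FmlA.just s A) := by
  induction h with
  | hyp hA => exact ⟨t, hyp (Set.mem_image_of_mem _ hA)⟩
  | @ax A hA =>
    obtain ⟨c, hc⟩ := hApp A hA
    exact ⟨TmA.const c, an 0 hc⟩
  | @mp A B _ _ ihAB ihA =>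
    obtain ⟨s, hs⟩ := ihAB
    obtain ⟨s', hs'⟩ := ihA
    exact ⟨s.app s', ((ax (AAxiom.j s s' A B)).mp hs).mp hs'⟩
  | an n hc => exact ⟨bangIterA (n + 1) (TmA.const _), an (n + 1) hc⟩

end DerivFromA

theorem consistentA_singleton_neg (hA : ¬ DerivA fl CS A) : ConsistentA fl CS {A.neg} := by
  intro hbot
  rw [← insert_empty_eq] at hbot
  exact hA (DerivFromA.derivA_of_empty ((DerivFromA.ax (AAxiom.cl3 A)).mp hbot.deduction))

theorem ConsistentA.setOf_just (hApp : AxAppropriateA fl CS) (hjd : fl.jd = true)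
    (hΓ : ConsistentA fl CS Γ) (t : TmA) : ConsistentA fl CS {A | FmlA.just t A ∈ Γ} := by
  intro hbot
  obtain ⟨s, hs⟩ := hbot.lift hApp t
  have hsΓ : FmlA.just t '' {A | FmlA.just t A ∈ Γ} ⊆ Γ := Set.image_subset_iff.mpr fun _ h => h
  exact hΓ ((DerivFromA.ax (AAxiom.jd s hjd)).mp (hs.mono hsΓ))

theorem ConsistentA.exists_maxConsistentA_superset (hΓ : ConsistentA fl CS Γ) :
    ∃ Δ, Γ ⊆ Δ ∧ MaxConsistentA fl CS Δ := by
  refine zorn_subset_nonempty {Δ | ConsistentA fl CS Δ} ?_ Γ hΓ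
  intro c hc hchain hne
  refine ⟨⋃₀ c, fun hbot => ?_, fun _ => Set.subset_sUnion_of_mem⟩
  obtain ⟨Δ, hΔ, hfin, hd⟩ := hbot.exists_finite_subset
  obtain ⟨Δ', hΔ'c, hΔΔ'⟩ :=
    hchain.directedOn.exists_mem_subset_of_finite_of_subset_sUnion hne hfin hΔ
  exact hc hΔ'c (hd.mono hΔΔ')

namespace MaxConsistentA

theorem consistentA (hΓ : MaxConsistentA fl CS Γ) : ConsistentA fl CS Γ := Maximal.prop hΓ

theorem derivFromA_insert_bot (hΓ : MaxConsistentA fl CS Γ) (hA : A ∉ Γ) :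
    DerivFromA fl CS (insert A Γ) FmlA.bot := by
  by_contra hcons
  exact hA (Maximal.mem_of_prop_insert hΓ hcons)

theorem mem_of_derivFromA (hΓ : MaxConsistentA fl CS Γ) (h : DerivFromA fl CS Γ A) : A ∈ Γ :=
  by_contra fun hA => hΓ.consistentA ((hΓ.derivFromA_insert_bot hA).deduction.mp h)

theorem neg_mem (hΓ : MaxConsistentA fl CS Γ) (hA : A ∉ Γ) : A.neg ∈ Γ :=
  hΓ.mem_of_derivFromA (hΓ.derivFromA_insert_bot hA).deduction

theorem imp_mem_iff (hΓ : MaxConsistentA fl CS Γ) : A.imp B ∈ Γ ↔ A ∉ Γ ∨ B ∈ Γ := by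
  constructor
  · intro hAB
    by_cases hA : A ∈ Γ
    · exact Or.inr (hΓ.mem_of_derivFromA ((DerivFromA.hyp hAB).mp (DerivFromA.hyp hA)))
    · exact Or.inl hA
  · rintro (hA | hB)
    · exact hΓ.mem_of_derivFromA
        ((DerivFromA.neg_imp_imp Γ A B).mp (DerivFromA.hyp (hΓ.neg_mem hA)))
    · exact hΓ.mem_of_derivFromA ((DerivFromA.ax (AAxiom.cl1 B A)).mp (DerivFromA.hyp hB))

end MaxConsistentA

def canonicalModelA (hApp : fl.jd = true → AxAppropriateA fl CS)
    (hW0 : ∃ Γ, MaxConsistentA fl CS Γ) : AModel fl CS (Set FmlA) where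
  W0 := {Γ | MaxConsistentA fl CS Γ}
  V Γ A := A ∈ Γ
  E Γ t := {Δ | ∀ A, FmlA.just t A ∈ Γ → A ∈ Δ}
  w0_nonempty := hW0
  v_bot _ hΓ hbot := hΓ.consistentA (DerivFromA.hyp hbot)
  v_imp _ hΓ _ _ := hΓ.imp_mem_iff
  v_just _ _ t A := ⟨fun hA _ hΔ => hΔ A hA, fun hsub => hsub fun _ hB => hB⟩
  e_plus Γ hΓ s t Δ hΔ := by
    constructor
    · intro A hA
      refine hΔ A (hΓ.mem_of_derivFromA ((DerivFromA.ax (AAxiom.jplus s t A)).mp ?_))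
      exact (DerivFromA.imp_or_left _ _ _).mp (DerivFromA.hyp hA)
    · intro A hA
      refine hΔ A (hΓ.mem_of_derivFromA ((DerivFromA.ax (AAxiom.jplus s t A)).mp ?_))
      exact (DerivFromA.ax (AAxiom.cl1 _ _)).mp (DerivFromA.hyp hA)
  e_app Γ hΓ s t Δ hΔ A := by
    rintro ⟨H, hs, ht⟩
    refine hΔ A (hΓ.mem_of_derivFromA ?_)
    exact ((DerivFromA.ax (AAxiom.j s t H A)).mp (DerivFromA.hyp (hs fun _ h => h))).mp
      (DerivFromA.hyp (ht fun _ h => h))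
  e_jd hjd Γ hΓ t :=
    let ⟨Δ, hsub, hΔ⟩ :=
      (hΓ.consistentA.setOf_just (hApp hjd) hjd t).exists_maxConsistentA_superset
    ⟨Δ, hΔ, fun _ hA => hsub hA⟩
  e_jt hjt _ hΓ t A hA :=
    hΓ.mem_of_derivFromA ((DerivFromA.ax (AAxiom.jt t A hjt)).mp (DerivFromA.hyp hA))
  e_j4 hj4 _ hΓ t _ hΔ A hA :=
    hΔ _ (hΓ.mem_of_derivFromA ((DerivFromA.ax (AAxiom.j4 t A hj4)).mp (DerivFromA.hyp hA)))
  e_cs _ hΓ _ _ hc _ hΔ := hΔ _ (hΓ.mem_of_derivFromA (DerivFromA.an 0 hc))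
  e_cs_bang _ hΓ _ _ hc n _ hΔ := hΔ _ (hΓ.mem_of_derivFromA (DerivFromA.an (n + 1) hc))

end

theorem completenessA_general (fl : FlagsA) (CS : Set (ℕ × FmlA))
    (hApp : fl.jd = true → AxAppropriateA fl CS) (F : FmlA)
    (h : ∀ (W : Type) (M : AModel fl CS W), ∀ Γ ∈ M.W0, M.V Γ F) :
    DerivA fl CS F := by
  by_contra hF
  obtain ⟨Γ, hnegF, hΓ⟩ := (consistentA_singleton_neg hF).exists_maxConsistentA_superset
  have hFΓ : F ∈ Γ := h _ (canonicalModelA hApp ⟨Γ, hΓ⟩) Γ hΓ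
  exact hΓ.consistentA ((DerivFromA.hyp (hnegF rfl)).mp (DerivFromA.hyp hFΓ))

/-- **Completeness of `L^A_CS` with respect to subset models**: if `CS` is
axiomatically appropriate in case `jd ∈ L^A`, then any formula true at all
normal worlds of all `L^A_CS`-subset models is derivable. -/
theorem completenessA (fl : FlagsA) (CS : Set (ℕ × FmlA)) (hCS : IsCSA fl CS)
    (hApp : fl.jd = true → AxAppropriateA fl CS) (F : FmlA)
    (h : ∀ (W : Type) (M : AModel fl CS W), ∀ Γ ∈ M.W0, M.V Γ F) :
    DerivA fl CS F :=
  completenessA_general fl CS hApp F h
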